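/- If g : ℝ → ℂ is a Schwartz function, then for every p ≥ 1 there exists a constant C = C(p,g) such that for every natural number n ≥ 1 and every real y with |y| ≤ 1/2, one has |F_n(g)(ny)|² ≤ C / (1 + (n|y|)^p), where F_n(g)(ξ) = (1/n) Σ_{x∈ℤ} g(x/n) e^{2πi x ξ/n} is the discrete Fourier transform of g. -/

import Mathlib

open MeasureTheory Real

/-- The discrete Fourier transform of an integrable function:
`F_n(g)(ξ) = (1/n) Σ_{x∈ℤ} g(x/n) e^{2πi x ξ/n}`. -/
noncomputable def discreteFourier (g : ℝ → ℂ) (n : ℕ) (ξ : ℝ) : ℂ :=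
  (1 / (n : ℂ)) * ∑' x : ℤ, g ((x : ℝ) / n) *
    Complex.exp (2 * (π : ℂ) * Complex.I * (x : ℂ) * (ξ : ℂ) / (n : ℂ))

/-!
Poisson summation, applied to the dilate `t ↦ 𝓕 g (n t)` (whose Fourier transform is
`n⁻¹ g (-ξ / n)` by Fourier inversion), gives `F_n(g)(n y) = ∑ₖ 𝓕 g (n (k - y))`.
Since `𝓕 g` is again a Schwartz function, `‖𝓕 g x‖ ≤ E (1 + |x|)^{-(m+2)}`. For `|y| ≤ 1/2`
the point `n (k - y)` is at distance at least `n |y|` from the origin and at least of order `|k|`,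
so the sum is `O((1 + n |y|)^{-m})`; with `m = ⌈p⌉` this is the claimed decay.
-/

open FourierTransform

lemma Real.fourier_comp_mul_left {E : Type*} [NormedAddCommGroup E] [NormedSpace ℂ E]
    (u : ℝ → E) {c : ℝ} (hc : c ≠ 0) (ξ : ℝ) :
    𝓕 (fun t => u (c * t)) ξ = |c|⁻¹ • 𝓕 u (ξ / c) := by
  have h := Measure.integral_comp_mul_left
    (fun v => Complex.exp (↑(-2 * π * v * (ξ / c)) * Complex.I) • u v) c
  simp only [Real.fourier_real_eq_integral_exp_smul, ← abs_inv, ← h]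
  congr with t
  field_simp

lemma SchwartzMap.fourier_fourier_apply {V E : Type*} [NormedAddCommGroup V]
    [InnerProductSpace ℝ V] [FiniteDimensional ℝ V] [MeasurableSpace V] [BorelSpace V]
    [NormedAddCommGroup E] [NormedSpace ℂ E] [CompleteSpace E] (g : SchwartzMap V E) (x : V) :
    𝓕 (𝓕 (⇑g)) x = g (-x) := by
  rw [← neg_neg x, ← Real.fourierInv_eq_fourier_neg, neg_neg,
    g.continuous.fourierInv_fourier_eq g.integrable (𝓕 g).integrable]

lemma summable_inv_one_add_abs_int_sq : Summable fun k : ℤ => ((1 + |(k : ℝ)|) ^ 2)⁻¹ := by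
  have h : Summable fun n : ℕ => ((1 + (n : ℝ)) ^ 2)⁻¹ := by
    simpa [add_comm] using (summable_nat_add_iff 1).mpr (Real.summable_nat_pow_inv.mpr one_lt_two)
  exact .of_nat_of_neg (by simpa using h) (by simpa using h)

lemma SchwartzMap.exists_norm_le_div_one_add_pow {E F : Type*} [NormedAddCommGroup E]
    [NormedSpace ℝ E] [NormedAddCommGroup F] [NormedSpace ℝ F] (u : SchwartzMap E F) (m : ℕ) :
    ∃ C, ∀ x, ‖u x‖ ≤ C / (1 + ‖x‖) ^ m := by
  refine ⟨2 ^ m * (Finset.Iic (m, 0)).sup (fun m => SchwartzMap.seminorm ℝ m.1 m.2) u,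
    fun x => ?_⟩
  rw [le_div_iff₀' (by positivity)]
  simpa using u.one_add_le_sup_seminorm_apply (𝕜 := ℝ) (m := (m, 0)) le_rfl le_rfl x

lemma SchwartzMap.tsum_fourier_comp_mul_sub (g : SchwartzMap ℝ ℂ) {c : ℝ} (hc : c ≠ 0) (y : ℝ) :
    ∑' k : ℤ, 𝓕 (⇑g) (c * (k - y)) =
      ((|c|⁻¹ : ℝ) : ℂ) * ∑' k : ℤ, g (k / c) * Complex.exp (2 * π * Complex.I * k * y) := by
  let f : SchwartzMap ℝ ℂ := SchwartzMap.compCLMOfContinuousLinearEquiv ℝ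
    (LinearEquiv.smulOfNeZero ℝ ℝ c hc).toContinuousLinearEquiv (𝓕 g)
  have hf (t : ℝ) : f t = 𝓕 (⇑g) (c * t) := rfl
  have hFf (ξ : ℝ) : 𝓕 (⇑f) ξ = |c|⁻¹ • g (-(ξ / c)) :=
    (Real.fourier_comp_mul_left _ hc ξ).trans (by rw [g.fourier_fourier_apply])
  calc ∑' k : ℤ, 𝓕 (⇑g) (c * (k - y))
      = ∑' k : ℤ, f (-y + k) := tsum_congr fun k => by rw [hf, neg_add_eq_sub]
    _ = ∑' k : ℤ, 𝓕 (⇑f) k * fourier k (↑(-y) : UnitAddCircle) := f.tsum_eq_tsum_fourier (-y)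
    _ = ∑' k : ℤ, |c|⁻¹ * (g (k / c) * Complex.exp (2 * π * Complex.I * k * y)) := by
      rw [← (Equiv.neg ℤ).tsum_eq]
      refine tsum_congr fun k => ?_
      rw [hFf, fourier_coe_apply]
      simp only [Equiv.neg_apply, Int.cast_neg, Complex.real_smul]
      push_cast
      ring_nf
    _ = _ := tsum_mul_left

lemma discreteFourier_natCast_mul (g : SchwartzMap ℝ ℂ) {n : ℕ} (hn : n ≠ 0) (y : ℝ) :
    discreteFourier (fun u => g u) n (n * y) = ∑' k : ℤ, 𝓕 (⇑g) (n * (k - y)) := by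
  rw [g.tsum_fourier_comp_mul_sub (Nat.cast_ne_zero.mpr hn), discreteFourier, Nat.abs_cast]
  push_cast
  rw [one_div]
  congr 1
  refine tsum_congr fun x => ?_
  field_simp

lemma abs_le_abs_intCast_sub {y : ℝ} (hy : |y| ≤ 1 / 2) (k : ℤ) : |y| ≤ |k - y| := by
  rcases eq_or_ne k 0 with rfl | hk
  · simp
  · have : (1 : ℝ) ≤ |(k : ℝ)| := by exact_mod_cast Int.one_le_abs hk
    linarith [abs_sub_abs_le_abs_sub (k : ℝ) y]

lemma one_add_mul_abs_pow_mul_le {c y : ℝ} (hc : 1 ≤ c) (hy : |y| ≤ 1 / 2) (k : ℤ) (m : ℕ) :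
    (1 + c * |y|) ^ m * (1 + |(k : ℝ)|) ^ 2 / 4 ≤ (1 + |c * (k - y)|) ^ (m + 2) := by
  have hcky : |c * (k - y)| = c * |k - y| := by rw [abs_mul, abs_of_pos (by linarith)]
  have hnear : 1 + c * |y| ≤ 1 + |c * (k - y)| := by
    rw [hcky]
    nlinarith [abs_le_abs_intCast_sub hy k]
  have hfar : 1 + |(k : ℝ)| ≤ 2 * (1 + |c * (k - y)|) := by
    rw [hcky]
    nlinarith [abs_sub_abs_le_abs_sub (k : ℝ) y, abs_nonneg ((k : ℝ) - y)]
  calc (1 + c * |y|) ^ m * (1 + |(k : ℝ)|) ^ 2 / 4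
      ≤ (1 + |c * (k - y)|) ^ m * (2 * (1 + |c * (k - y)|)) ^ 2 / 4 := by gcongr
    _ = (1 + |c * (k - y)|) ^ (m + 2) := by ring

lemma exists_norm_tsum_comp_mul_sub_mul_le {F : Type*} [NormedAddCommGroup F] {f : ℝ → F}
    {C : ℝ} {m : ℕ} (hf : ∀ x, ‖f x‖ ≤ C / (1 + |x|) ^ (m + 2)) :
    ∃ D, ∀ c, 1 ≤ c → ∀ y, |y| ≤ 1 / 2 →
      ‖∑' k : ℤ, f (c * (k - y))‖ * (1 + c * |y|) ^ m ≤ D := by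
  have hC : 0 ≤ C := by simpa using (norm_nonneg _).trans (hf 0)
  refine ⟨4 * C * ∑' k : ℤ, ((1 + |(k : ℝ)|) ^ 2)⁻¹, fun c hc y hy => ?_⟩
  have hs : 0 < (1 + c * |y|) ^ m := by positivity
  set w : ℤ → ℝ := fun k => 4 * C / (1 + c * |y|) ^ m * ((1 + |(k : ℝ)|) ^ 2)⁻¹
  have hw : Summable w := summable_inv_one_add_abs_int_sq.mul_left _
  have hterm (k : ℤ) : ‖f (c * (k - y))‖ ≤ w k := by
    calc ‖f (c * (k - y))‖ ≤ C / (1 + |c * (k - y)|) ^ (m + 2) := hf _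
      _ ≤ C / ((1 + c * |y|) ^ m * (1 + |(k : ℝ)|) ^ 2 / 4) :=
        div_le_div_of_nonneg_left hC (by positivity) (one_add_mul_abs_pow_mul_le hc hy k m)
      _ = w k := by simp only [w]; field_simp
  have hnorm : Summable fun k : ℤ => ‖f (c * (k - y))‖ :=
    hw.of_nonneg_of_le (fun _ => norm_nonneg _) hterm
  calc ‖∑' k : ℤ, f (c * (k - y))‖ * (1 + c * |y|) ^ m
      ≤ (∑' k, w k) * (1 + c * |y|) ^ m := by
        gcongr
        exact (norm_tsum_le_tsum_norm hnorm).trans (hnorm.tsum_le_tsum hterm hw)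
    _ = 4 * C * ∑' k : ℤ, ((1 + |(k : ℝ)|) ^ 2)⁻¹ := by
        simp only [w, tsum_mul_left]
        field_simp

lemma one_add_rpow_le_two_mul_one_add_pow_ceil {t p : ℝ} (ht : 0 ≤ t) (hp : 0 ≤ p) :
    1 + t ^ p ≤ 2 * (1 + t) ^ ⌈p⌉₊ := by
  have hpow : t ^ p ≤ (1 + t) ^ ⌈p⌉₊ :=
    calc t ^ p ≤ (1 + t) ^ p := by gcongr; linarith
      _ ≤ (1 + t) ^ (⌈p⌉₊ : ℝ) := by gcongr; linarith; exact Nat.le_ceil p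
      _ = (1 + t) ^ ⌈p⌉₊ := Real.rpow_natCast _ _
  linarith [one_le_pow₀ (n := ⌈p⌉₊) (by linarith : (1 : ℝ) ≤ 1 + t)]

theorem stmt_1 (g : SchwartzMap ℝ ℂ) (p : ℝ) (hp : 1 ≤ p) :
    ∃ C : ℝ, 0 < C ∧ ∀ n : ℕ, 1 ≤ n → ∀ y : ℝ, |y| ≤ 1/2 →
      ‖discreteFourier (fun u => g u) n ((n : ℝ) * y)‖ ^ 2
        ≤ C / (1 + ((n : ℝ) * |y|) ^ p) := by
  obtain ⟨E, hE⟩ := (𝓕 g).exists_norm_le_div_one_add_pow (⌈p⌉₊ + 2)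
  obtain ⟨D, hD⟩ := exists_norm_tsum_comp_mul_sub_mul_le (f := 𝓕 ⇑g) hE
  refine ⟨2 * D ^ 2 + 1, by positivity, fun n hn y hy => ?_⟩
  have hF := hD n (by exact_mod_cast hn) y hy
  rw [← discreteFourier_natCast_mul g (by omega)] at hF
  set a := ‖discreteFourier (fun u => g u) n (n * y)‖
  set s := (1 + n * |y|) ^ ⌈p⌉₊
  have hs : 1 ≤ s := one_le_pow₀ (le_add_of_nonneg_right (by positivity))
  have hpow := one_add_rpow_le_two_mul_one_add_pow_ceil (t := n * |y|) (p := p)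
    (by positivity) (by linarith)
  rw [le_div_iff₀ (by positivity)]
  calc a ^ 2 * (1 + (n * |y|) ^ p) ≤ a ^ 2 * (2 * s) := by gcongr
    _ ≤ 2 * (a * s) ^ 2 := by nlinarith [sq_nonneg a]
    _ ≤ 2 * D ^ 2 := by gcongr
    _ ≤ 2 * D ^ 2 + 1 := by linarith
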